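/- Let c₁,…,c_m be elements of a free group F whose product c₁⋯c_m reduces to the identity, and suppose each c_i factors without internal cancellation as c_i = 𝓛_i 𝓦_i 𝓡_i where |𝓛_i| equals the left cancellation amount of c_i with c_{i-1}, |𝓡_i| equals the right cancellation amount with c_{i+1}, and |𝓦_i| > 0 for all i (with 𝓛₁ and 𝓡_m trivial). Then the product 𝓦₁𝓦₂⋯𝓦_m is a nonempty reduced word, contradicting that it must equal the identity; hence no such factorization exists. -/

import Mathlib

/-!
Let `P k = c₀ ⋯ c_{k-1}`. By induction on `k`, the reduced words of `P k` and `c k` cancel in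
exactly `|𝓛_k|` letters: since `|𝓛_k| + |𝓡_k| < |c_k|`, the letters of `c_k` cancelled by
`P k` and those cancelled by `c_{k+1}` do not overlap, so appending `c_k` to `P k` leaves the
cancellation with `c_{k+1}` unchanged, and that is `|𝓡_k| = |𝓛_{k+1}|`. For `k = m - 1`
we get `P (m-1) = c_{m-1}⁻¹`, so `c_{m-1}` cancels completely against `P (m-1)`, i.e.
`|c_{m-1}| = |𝓛_{m-1}|`, which leaves no room for the nonempty `𝓦_{m-1}`.
-/

namespace FreeGroup

variable {α : Type*}

theorem IsReduced.exists_cancel_append {u v : List (α × Bool)} (hu : IsReduced u)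
    (hv : IsReduced v) : ∃ p s q, u = p ++ s ∧ v = invRev s ++ q ∧ IsReduced (p ++ q) := by
  induction u using List.reverseRecOn generalizing v with
  | nil => exact ⟨[], [], v, rfl, rfl, hv⟩
  | append_singleton u a ih =>
    cases v with
    | nil => exact ⟨u ++ [a], [], [], by simp, rfl, by simpa using hu⟩
    | cons b v =>
      by_cases hb : b = (a.1, !a.2)
      · subst hb
        obtain ⟨p, s, q, rfl, rfl, hpq⟩ :=
          ih (hu.infix (List.prefix_append _ _).isInfix) (hv.infix (List.suffix_cons _ _).isInfix)
        exact ⟨p, s ++ [a], q, by simp, by simp [invRev], hpq⟩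
      · refine ⟨u ++ [a], [], b :: v, by simp, rfl, ?_⟩
        have hab : IsReduced ([a] ++ b :: v) := by
          refine isReduced_cons_cons.mpr ⟨fun h => ?_, hv⟩
          obtain ⟨a₁, a₂⟩ := a
          obtain ⟨b₁, b₂⟩ := b
          simp only at h
          subst h
          cases a₂ <;> cases b₂ <;> simp_all
        simpa using hu.append_overlap hab (List.cons_ne_nil a [])

variable [DecidableEq α]

/-- `x * y` cancels exactly `a` letters of each of `x` and `y`. -/
def Cancels (x y : FreeGroup α) (a : ℕ) : Prop :=
  norm x + norm y = norm (x * y) + 2 * a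

theorem exists_toWord_mul (x y : FreeGroup α) :
    ∃ p s q, x.toWord = p ++ s ∧ y.toWord = invRev s ++ q ∧ (x * y).toWord = p ++ q := by
  obtain ⟨p, s, q, hx, hy, hpq⟩ :=
    isReduced_toWord.exists_cancel_append (isReduced_toWord (x := y))
  refine ⟨p, s, q, hx, hy, ?_⟩
  have : x * y = mk (p ++ q) := by
    rw [← mk_toWord (x := x), ← mk_toWord (x := y), hx, hy]
    simp [← mul_mk, ← inv_mk, mul_assoc]
  rw [this, toWord_mk, hpq.reduce_eq]

theorem Cancels.mul_left {x y z : FreeGroup α} {a b : ℕ} (hxy : Cancels x y a)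
    (hyz : Cancels y z b) (hab : a + b < norm y) : Cancels (x * y) z b := by
  obtain ⟨p, s, q, hx, hy, hxy'⟩ := exists_toWord_mul x y
  obtain ⟨p', s', q', hy', hz, hyz'⟩ := exists_toWord_mul y z
  have hs : s.length = a := by
    simp only [Cancels, norm, hx, hy, hxy', List.length_append, invRev_length] at hxy
    omega
  have hs' : s'.length = b := by
    simp only [Cancels, norm, hy', hz, hyz', List.length_append, invRev_length] at hyz
    omega
  simp only [norm, hy, List.length_append, invRev_length] at hab
  -- `y = s⁻¹ m s'` with `m` nonempty, so `x y z` is the reduced word `p m q'`.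
  obtain ⟨m, rfl, rfl⟩ : ∃ m, p' = invRev s ++ m ∧ q = m ++ s' := by
    rcases List.append_eq_append_iff.mp (hy.symm.trans hy') with ⟨m, hp', hq⟩ | ⟨m, hs₁, hs₂⟩
    · exact ⟨m, hp', hq⟩
    · have h₁ := congrArg List.length hs₁
      have h₂ := congrArg List.length hs₂
      simp only [List.length_append, invRev_length] at h₁ h₂
      omega
  have hm : m ≠ [] := by
    rintro rfl
    simp only [List.length_append, List.length_nil] at hab
    omega
  have hxyz : x * y * z = mk (p ++ m ++ q') := by
    rw [← mk_toWord (x := x * y), ← mk_toWord (x := z), hxy', hz]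
    simp [← mul_mk, ← inv_mk, mul_assoc]
  have hred : IsReduced (p ++ m ++ q') := by
    have h₁ : IsReduced (p ++ m) :=
      (isReduced_toWord (x := x * y)).infix ⟨[], s', by simp [hxy']⟩
    have h₂ : IsReduced (m ++ q') :=
      (isReduced_toWord (x := y * z)).infix ⟨invRev s, [], by simp [hyz']⟩
    exact h₁.append_overlap h₂ hm
  simp only [Cancels, norm, hxyz, toWord_mk, hred.reduce_eq, hxy', hz, List.length_append,
    invRev_length]
  omega

theorem cancels_prod_range {c : ℕ → FreeGroup α} {ℓ : ℕ → ℕ} {m : ℕ} (hℓ₀ : ℓ 0 = 0)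
    (hc : ∀ i, 0 < i → i < m → Cancels (c (i - 1)) (c i) (ℓ i))
    (hlt : ∀ i, i + 1 < m → ℓ i + ℓ (i + 1) < norm (c i)) :
    ∀ k < m, Cancels ((List.range k).map c).prod (c k) (ℓ k) := by
  intro k hk
  induction k with
  | zero => simp [Cancels, hℓ₀]
  | succ k ih =>
    have hstep : Cancels (c k) (c (k + 1)) (ℓ (k + 1)) := hc (k + 1) k.succ_pos hk
    simpa [List.range_succ] using (ih (by omega)).mul_left hstep (hlt k hk)

end FreeGroup

theorem no_exact_factorization_general (n m : ℕ) (hm : 1 ≤ m)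
    (c L W R : ℕ → FreeGroup (Fin n))
    (hprod : ((List.range m).map c).prod = 1)
    (hnc : ∀ i < m, FreeGroup.norm (c i) =
      FreeGroup.norm (L i) + FreeGroup.norm (W i) + FreeGroup.norm (R i))
    (hL : ∀ i, 0 < i → i < m →
      FreeGroup.norm (c (i - 1)) + FreeGroup.norm (c i) =
        FreeGroup.norm (c (i - 1) * c i) + 2 * FreeGroup.norm (L i))
    (hR : ∀ i, i + 1 < m →
      FreeGroup.norm (c i) + FreeGroup.norm (c (i + 1)) =
        FreeGroup.norm (c i * c (i + 1)) + 2 * FreeGroup.norm (R i))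
    (hW : ∀ i < m, 0 < FreeGroup.norm (W i))
    (hL0 : L 0 = 1) : False := by
  have hlt : ∀ i, i + 1 < m →
      FreeGroup.norm (L i) + FreeGroup.norm (L (i + 1)) < FreeGroup.norm (c i) := by
    intro i hi
    have hRL := hL (i + 1) i.succ_pos hi
    rw [Nat.add_sub_cancel] at hRL
    linarith [hR i hi, hnc i (by omega), hW i (by omega)]
  obtain ⟨k, rfl⟩ : ∃ k, m = k + 1 := ⟨m - 1, by omega⟩
  have hlast := FreeGroup.cancels_prod_range (by simp [hL0]) hL hlt k k.lt_succ_self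
  have hone : ((List.range k).map c).prod * c k = 1 := by simpa [List.range_succ] using hprod
  rw [FreeGroup.Cancels, hone, eq_inv_of_mul_eq_one_left hone, FreeGroup.norm_inv_eq,
    FreeGroup.norm_one] at hlast
  linarith [hnc k k.lt_succ_self, hW k k.lt_succ_self]

/-- Lemma (emptyW contradiction): suppose `c₀ ⋯ c_{m-1}` reduces to the identity
in a free group, and each `c_i` factors without internal cancellation as
`c_i = 𝓛_i * 𝓦_i * 𝓡_i`, where `|𝓛_i|` is exactly the cancellation amount of
`c_i` with `c_{i-1}` and `|𝓡_i|` is exactly the cancellation amount with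
`c_{i+1}`, with `𝓛₀` and `𝓡_{m-1}` trivial and every `𝓦_i` nonempty.  Then we
reach a contradiction: no such factorization exists. -/
theorem no_exact_factorization (n m : ℕ) (hm : 1 ≤ m)
    (c L W R : ℕ → FreeGroup (Fin n))
    (hprod : ((List.range m).map c).prod = 1)
    (hfac : ∀ i < m, c i = L i * W i * R i)
    (hnc : ∀ i < m, FreeGroup.norm (c i) =
      FreeGroup.norm (L i) + FreeGroup.norm (W i) + FreeGroup.norm (R i))
    (hL : ∀ i, 0 < i → i < m →
      FreeGroup.norm (c (i - 1)) + FreeGroup.norm (c i) =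
        FreeGroup.norm (c (i - 1) * c i) + 2 * FreeGroup.norm (L i))
    (hR : ∀ i, i + 1 < m →
      FreeGroup.norm (c i) + FreeGroup.norm (c (i + 1)) =
        FreeGroup.norm (c i * c (i + 1)) + 2 * FreeGroup.norm (R i))
    (hW : ∀ i < m, 0 < FreeGroup.norm (W i))
    (hL0 : L 0 = 1) (hRlast : R (m - 1) = 1) : False :=
  no_exact_factorization_general n m hm c L W R hprod hnc hL hR hW hL0
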